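/- arXiv:1603.06228 — 2 statements merged into one kernel-verified Lean document; each statement's English description precedes it below -/
import Mathlib

section
/- Let f be nilpotent on a finite-dimensional vector space V over any field with V = ⟨U_{a_1}⟩ ⊕ ⋯ ⊕ ⟨U_{a_m}⟩ the decomposition by exponents. If X is a characteristic subspace of V, then for each i there is an integer c_i with 0 ≤ c_i ≤ a_i such that X ∩ ⟨U_{a_i}⟩ = f^{c_i}⟨U_{a_i}⟩. -/
open LinearMap

variable {K : Type*} [Field K] {V : Type*} [AddCommGroup V] [Module K V]

/-- `X` is hyperinvariant for `f`: invariant under every endomorphism commuting with `f`. -/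
def Hinv (f : V →ₗ[K] V) (X : Submodule K V) : Prop :=
  ∀ g : V →ₗ[K] V, g ∘ₗ f = f ∘ₗ g → X.map g ≤ X

/-- `X` is characteristic for `f`: `f`-invariant and fixed by every automorphism commuting with `f`. -/
def Chinv (f : V →ₗ[K] V) (X : Submodule K V) : Prop :=
  X.map f ≤ X ∧
    ∀ α : V ≃ₗ[K] V, (α : V →ₗ[K] V) ∘ₗ f = f ∘ₗ (α : V →ₗ[K] V) →
      X.map (α : V →ₗ[K] V) = X

/-- The cyclic subspace generated by `x`. -/
def cyc (f : V →ₗ[K] V) (x : V) : Submodule K V :=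
  Submodule.span K (Set.range fun i : ℕ => (f ^ i) x)

/-- `x` has exponent `ℓ`. -/
def ExpEq (f : V →ₗ[K] V) (x : V) (ℓ : ℕ) : Prop :=
  (f ^ ℓ) x = 0 ∧ ∀ j < ℓ, (f ^ j) x ≠ 0

/-- `x` has height `q`. -/
def HeightEq (f : V →ₗ[K] V) (x : V) (q : ℕ) : Prop :=
  x ∈ LinearMap.range (f ^ q) ∧ x ∉ LinearMap.range (f ^ (q + 1))

/-- The `r`-th Ulm invariant: number of Jordan blocks of size `r` (for `r ≥ 1`). -/
noncomputable def ulm (f : V →ₗ[K] V) (r : ℕ) : ℕ :=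
  Module.finrank K ↥(LinearMap.ker f ⊓ LinearMap.range (f ^ (r - 1))) -
    Module.finrank K ↥(LinearMap.ker f ⊓ LinearMap.range (f ^ r))

/-- `u` is a generator tuple with exponents `t`. -/
def IsGenTuple {k : ℕ} (f : V →ₗ[K] V) (u : Fin k → V) (t : Fin k → ℕ) : Prop :=
  (∀ i, ExpEq f (u i) (t i)) ∧ DirectSum.IsInternal (fun i => cyc f (u i))

/-- The summand `⟨U_a⟩` of all cyclic subspaces whose generator has exponent `a`. -/
def subU {k : ℕ} (f : V →ₗ[K] V) (u : Fin k → V) (t : Fin k → ℕ) (a : ℕ) : Submodule K V :=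
  ⨆ i ∈ {i : Fin k | t i = a}, cyc f (u i)

/-!
Put `W = ⟨U_a⟩` and let `c` be least with `f ^ c W ≤ X`; `c ≤ a` because `f ^ a W = 0`.
If `y ∈ X ⊓ W` lies in `f ^ q W` but not in `f ^ (q + 1) W`, write `y = f ^ q z` with
`z ∈ W \ f W`. Modulo `f V`, `z` has a nonzero coordinate at some generator `u i` of exponent
`a`, so replacing `u i` by `z` defines an endomorphism commuting with `f` that is onto modulo
`f V`, hence onto by Nakayama's lemma for nilpotent `f`, hence an automorphism. It sends
`f ^ q (u i)` to `y ∈ X`, so `f ^ q (u i) ∈ X`; permuting the generators of exponent `a` gives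
`f ^ q W ≤ X`. Hence `c ≤ q` and `y ∈ f ^ c W`.
-/

section Invariant

variable {f : V →ₗ[K] V} {N : Submodule K V}

lemma Submodule.map_pow_le_of_map_le (hN : N.map f ≤ N) (n : ℕ) : N.map (f ^ n) ≤ N := by
  rintro _ ⟨x, hx, rfl⟩
  exact Module.End.pow_apply_mem_of_forall_mem n (fun y hy => hN ⟨y, hy, rfl⟩) x hx

lemma Submodule.map_pow_antitone_of_map_le (hN : N.map f ≤ N) {m n : ℕ} (hmn : m ≤ n) :
    N.map (f ^ n) ≤ N.map (f ^ m) := by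
  rw [← Nat.add_sub_cancel' hmn, pow_add, Module.End.mul_eq_comp, Submodule.map_comp]
  exact Submodule.map_mono (N.map_pow_le_of_map_le hN _)

/-- Nakayama's lemma for a nilpotent endomorphism. -/
lemma Submodule.eq_top_of_sup_range_eq_top (hf : IsNilpotent f) (hN : N.map f ≤ N)
    (h : N ⊔ range f = ⊤) : N = ⊤ := by
  have hsup (m : ℕ) : N ⊔ range (f ^ m) = ⊤ := by
    induction m with
    | zero => simp [Module.End.one_eq_id]
    | succ m ih =>
      have : range (f ^ m) ≤ N ⊔ range (f ^ (m + 1)) := by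
        rw [← Submodule.map_top, ← h, Submodule.map_sup, pow_succ, Module.End.mul_eq_comp,
          range_comp]
        exact sup_le_sup_right (N.map_pow_le_of_map_le hN m) _
      rw [eq_top_iff, ← ih]
      exact sup_le le_sup_left this
  obtain ⟨n, hn⟩ := hf
  simpa [hn] using hsup n

lemma exists_inf_eq_map_pow {X : Submodule K V} {a : ℕ} (hN : N.map f ≤ N)
    (ha : N.map (f ^ a) = ⊥)
    (hX : ∀ q, ∀ z ∈ N, z ∉ N.map f → (f ^ q) z ∈ X → N.map (f ^ q) ≤ X) :
    ∃ c ≤ a, X ⊓ N = N.map (f ^ c) := by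
  classical
  have hex : ∃ n, N.map (f ^ n) ≤ X := ⟨a, by simp [ha]⟩
  set c := Nat.find hex
  refine ⟨c, Nat.find_min' hex (by simp [ha]), le_antisymm ?_
    (le_inf (Nat.find_spec hex) (N.map_pow_le_of_map_le hN c))⟩
  rintro y ⟨hyX, hyN⟩
  by_contra hyc
  obtain ⟨q, hyq, hyq1⟩ := Nat.exists_not_and_succ_of_not_zero_of_exists
    (p := fun n => y ∉ N.map (f ^ n)) (by simpa [Module.End.one_eq_id] using hyN) ⟨c, hyc⟩
  obtain ⟨z, hz, rfl⟩ := not_not.1 hyq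
  have hzf : z ∉ N.map f := by
    rintro ⟨w, hw, rfl⟩
    exact hyq1 ⟨w, hw, by rw [pow_succ, Module.End.mul_apply]⟩
  have hcq : c ≤ q := Nat.find_min' hex (hX q z hz hzf hyX)
  exact hyc (N.map_pow_antitone_of_map_le hN hcq ⟨z, hz, rfl⟩)

end Invariant

lemma Chinv.pow_apply_mem_iff {f : V →ₗ[K] V} {X : Submodule K V} (hX : Chinv f X)
    {α : V ≃ₗ[K] V} (hα : (α : V →ₗ[K] V) ∘ₗ f = f ∘ₗ (α : V →ₗ[K] V)) (q : ℕ) (x : V) :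
    (f ^ q) (α x) ∈ X ↔ (f ^ q) x ∈ X := by
  have hcomm : (α : V →ₗ[K] V) ((f ^ q) x) = (f ^ q) (α x) :=
    (LinearMap.congr_fun (Module.End.commute_pow_left_of_commute hα.symm q) x).symm
  conv_lhs => rw [← hcomm, ← hX.2 α hα]
  simp

section Cyclic

variable {f : V →ₗ[K] V}

lemma cyc_le {N : Submodule K V} {x : V} (hN : N.map f ≤ N) (hx : x ∈ N) : cyc f x ≤ N := by
  rw [cyc, Submodule.span_le]
  rintro _ ⟨m, rfl⟩
  exact N.map_pow_le_of_map_le hN m ⟨x, hx, rfl⟩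

lemma mem_cyc_self (x : V) : x ∈ cyc f x :=
  Submodule.subset_span ⟨0, by simp⟩

lemma cyc_map_le (x : V) : (cyc f x).map f ≤ cyc f x := by
  rw [cyc, Submodule.map_span_le]
  rintro _ ⟨m, rfl⟩
  exact Submodule.subset_span ⟨m + 1, by simp only [pow_succ', Module.End.mul_apply]⟩

lemma map_pow_cyc (x : V) (q : ℕ) : (cyc f x).map (f ^ q) = cyc f ((f ^ q) x) := by
  rw [cyc, cyc, Submodule.map_span, ← Set.range_comp]
  congr 2
  funext m
  simp only [Function.comp_apply, ← Module.End.mul_apply, ← pow_add, add_comm]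

lemma cyc_zero : cyc f (0 : V) = ⊥ := by
  simp [cyc]

lemma ExpEq.linearIndependent {x : V} {n : ℕ} (h : ExpEq f x n) :
    LinearIndependent K (fun j : Fin n => (f ^ (j : ℕ)) x) := by
  induction n generalizing x with
  | zero => exact linearIndependent_empty_type
  | succ n ih =>
    have hfx : ExpEq f (f x) n := by
      refine ⟨?_, fun j hj => ?_⟩
      · rw [← Module.End.mul_apply, ← pow_succ]; exact h.1
      · rw [← Module.End.mul_apply, ← pow_succ]; exact h.2 (j + 1) (by omega)
    have hcons : (fun j : Fin (n + 1) => (f ^ (j : ℕ)) x) =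
        Fin.cons x (fun j : Fin n => (f ^ (j : ℕ)) (f x)) := by
      funext j
      refine Fin.cases (by simp) (fun j => ?_) j
      simp [pow_succ]
    have hker : Submodule.span K (Set.range fun j : Fin n => (f ^ (j : ℕ)) (f x)) ≤
        ker (f ^ n) := by
      rw [Submodule.span_le]
      rintro _ ⟨j, rfl⟩
      rw [SetLike.mem_coe, mem_ker, ← Module.End.mul_apply, ← Module.End.mul_apply, ← pow_add,
        ← pow_succ]
      exact Module.End.pow_map_zero_of_le (by omega) h.1
    rw [hcons]
    exact (ih hfx).finCons fun hx => h.2 n n.lt_succ_self (hker hx)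

lemma ExpEq.cyc_eq_span {x : V} {n : ℕ} (h : ExpEq f x n) :
    cyc f x = Submodule.span K (Set.range fun j : Fin n => (f ^ (j : ℕ)) x) := by
  refine le_antisymm ?_ (Submodule.span_mono ?_)
  · rw [cyc, Submodule.span_le]
    rintro _ ⟨m, rfl⟩
    rcases lt_or_ge m n with hm | hm
    · exact Submodule.subset_span ⟨⟨m, hm⟩, rfl⟩
    · simp [Module.End.pow_map_zero_of_le hm h.1]
  · rintro _ ⟨j, rfl⟩
    exact ⟨j, rfl⟩

noncomputable def ExpEq.cycBasis {x : V} {n : ℕ} (h : ExpEq f x n) :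
    Module.Basis (Fin n) K (cyc f x) :=
  (Module.Basis.span h.linearIndependent).map (LinearEquiv.ofEq _ _ h.cyc_eq_span.symm)

lemma ExpEq.cycBasis_apply {x : V} {n : ℕ} (h : ExpEq f x n) (j : Fin n) :
    (h.cycBasis j : V) = (f ^ (j : ℕ)) x := by
  simp [ExpEq.cycBasis, Module.Basis.span_apply]

end Cyclic

namespace IsGenTuple

variable {k : ℕ} {f : V →ₗ[K] V} {u : Fin k → V} {t : Fin k → ℕ} (hu : IsGenTuple f u t)
include hu

noncomputable def basis : Module.Basis (Σ i, Fin (t i)) K V :=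
  hu.2.collectedBasis fun i => (hu.1 i).cycBasis

lemma basis_apply (p : Σ i, Fin (t i)) : hu.basis p = (f ^ (p.2 : ℕ)) (u p.1) := by
  rw [basis, hu.2.collectedBasis_coe]
  exact (hu.1 p.1).cycBasis_apply p.2

noncomputable def extend (v : Fin k → V) : V →ₗ[K] V :=
  hu.basis.constr K fun p => (f ^ (p.2 : ℕ)) (v p.1)

variable {v : Fin k → V} (hv : ∀ i, (f ^ t i) (v i) = 0)
include hv

lemma extend_apply_pow (i : Fin k) (j : ℕ) :
    hu.extend v ((f ^ j) (u i)) = (f ^ j) (v i) := by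
  rcases lt_or_ge j (t i) with hj | hj
  · rw [← hu.basis_apply ⟨i, ⟨j, hj⟩⟩, extend, Module.Basis.constr_basis]
  · rw [Module.End.pow_map_zero_of_le hj (hu.1 i).1, Module.End.pow_map_zero_of_le hj (hv i),
      map_zero]

lemma extend_apply (i : Fin k) : hu.extend v (u i) = v i := by
  simpa using hu.extend_apply_pow hv i 0

lemma extend_comp_eq : hu.extend v ∘ₗ f = f ∘ₗ hu.extend v := by
  refine hu.basis.ext fun p => ?_
  have hsucc (y : V) : f ((f ^ (p.2 : ℕ)) y) = (f ^ ((p.2 : ℕ) + 1)) y := by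
    rw [pow_succ', Module.End.mul_apply]
  rw [comp_apply, comp_apply, basis_apply, hsucc, hu.extend_apply_pow hv,
    hu.extend_apply_pow hv, hsucc]

lemma exists_linearEquiv [FiniteDimensional K V] (hf : IsNilpotent f)
    (hr : ∀ i, u i ∈ range (hu.extend v) ⊔ range f) :
    ∃ α : V ≃ₗ[K] V, (α : V →ₗ[K] V) ∘ₗ f = f ∘ₗ (α : V →ₗ[K] V) ∧ ∀ i, α (u i) = v i := by
  have hcomm := hu.extend_comp_eq hv
  have hrange : range (hu.extend v) = ⊤ := by
    refine Submodule.eq_top_of_sup_range_eq_top hf ?_ (eq_top_iff.2 ?_)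
    · rintro _ ⟨_, ⟨w, rfl⟩, rfl⟩
      exact ⟨f w, LinearMap.congr_fun hcomm w⟩
    · rw [← hu.2.submodule_iSup_eq_top]
      exact iSup_le fun i => cyc_le (map_le_range.trans le_sup_right) (hr i)
  have hsurj := range_eq_top.1 hrange
  exact ⟨.ofBijective _ ⟨injective_iff_surjective.2 hsurj, hsurj⟩, hcomm, hu.extend_apply hv⟩

end IsGenTuple

section SubU

variable {k : ℕ} {f : V →ₗ[K] V} {u : Fin k → V} {t : Fin k → ℕ} {a : ℕ}

lemma map_pow_subU (q : ℕ) :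
    (subU f u t a).map (f ^ q) = ⨆ i ∈ {i : Fin k | t i = a}, cyc f ((f ^ q) (u i)) := by
  simp only [subU, Submodule.map_iSup, map_pow_cyc]

lemma subU_map_le : (subU f u t a).map f ≤ subU f u t a := by
  simp only [subU, Submodule.map_iSup]
  exact iSup₂_mono fun i _ => cyc_map_le (u i)

lemma map_pow_subU_eq_bot (hu : ∀ i, (f ^ t i) (u i) = 0) :
    (subU f u t a).map (f ^ a) = ⊥ := by
  rw [map_pow_subU, eq_bot_iff]
  refine iSup₂_le fun i (hi : t i = a) => ?_
  rw [← hi, hu i, cyc_zero]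

lemma subU_le_span_sup_map :
    subU f u t a ≤ Submodule.span K (u '' {i | t i = a}) ⊔ (subU f u t a).map f := by
  have hspan : Submodule.span K (u '' {i | t i = a}) ≤ subU f u t a := by
    rw [Submodule.span_le]
    rintro _ ⟨i, hi, rfl⟩
    exact (le_iSup₂ (f := fun i (_ : t i = a) => cyc f (u i)) i hi) (mem_cyc_self (u i))
  refine iSup₂_le fun i hi =>
    cyc_le ?_ (Submodule.mem_sup_left (Submodule.subset_span ⟨i, hi, rfl⟩))
  rw [Submodule.map_sup]
  exact sup_le ((Submodule.map_mono hspan).trans le_sup_right)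
    ((Submodule.map_mono subU_map_le).trans le_sup_right)

lemma exists_mem_span_insert_sup_range {z : V} (hz : z ∈ subU f u t a)
    (hzf : z ∉ (subU f u t a).map f) :
    ∃ i, t i = a ∧ u i ∈ Submodule.span K (insert z (u '' {i}ᶜ)) ⊔ range f := by
  obtain ⟨y, hy, w, hw, rfl⟩ := Submodule.mem_sup.1 (subU_le_span_sup_map hz)
  obtain ⟨l, hl, rfl⟩ := (Finsupp.mem_span_image_iff_linearCombination K).1 hy
  obtain ⟨i, hi⟩ : l.support.Nonempty := by
    rw [Finset.nonempty_iff_ne_empty, Ne, Finsupp.support_eq_empty]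
    rintro rfl
    exact hzf (by simpa using hw)
  refine ⟨i, hl hi, ?_⟩
  have hsplit : Finsupp.linearCombination K u l =
      l i • u i + Finsupp.linearCombination K u (l.erase i) := by
    conv_lhs => rw [← Finsupp.single_add_erase i l]
    rw [map_add, Finsupp.linearCombination_single]
  have hrest : Finsupp.linearCombination K u (l.erase i) ∈ Submodule.span K (u '' {i}ᶜ) := by
    refine (Finsupp.mem_span_image_iff_linearCombination K).2 ⟨_, ?_, rfl⟩
    rw [Finsupp.mem_supported, Finsupp.support_erase]
    exact fun j hj => Finset.ne_of_mem_erase hj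
  rw [← Submodule.smul_mem_iff _ (Finsupp.mem_support_iff.1 hi),
    show l i • u i = (Finsupp.linearCombination K u l + w) -
      Finsupp.linearCombination K u (l.erase i) - w by rw [hsplit]; abel]
  refine Submodule.sub_mem _ (Submodule.sub_mem _ (Submodule.mem_sup_left ?_)
    (Submodule.mem_sup_left ?_)) (Submodule.mem_sup_right (map_le_range hw))
  · exact Submodule.subset_span (Set.mem_insert _ _)
  · exact Submodule.span_mono (Set.subset_insert _ _) hrest

end SubU

namespace IsGenTuple

variable [FiniteDimensional K V] {k : ℕ} {f : V →ₗ[K] V} {u : Fin k → V} {t : Fin k → ℕ}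
  (hu : IsGenTuple f u t) (hf : IsNilpotent f)
include hu hf

lemma exists_linearEquiv_apply_eq_of_eq {i j : Fin k} (hij : t i = t j) :
    ∃ α : V ≃ₗ[K] V, (α : V →ₗ[K] V) ∘ₗ f = f ∘ₗ (α : V →ₗ[K] V) ∧ α (u i) = u j := by
  set σ := Equiv.swap i j
  have hσ (l : Fin k) : t (σ l) = t l := by
    rcases eq_or_ne l i with rfl | hli
    · simp [σ, hij]
    rcases eq_or_ne l j with rfl | hlj
    · simp [σ, hij]
    · rw [Equiv.swap_apply_of_ne_of_ne hli hlj]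
  have hv (l : Fin k) : (f ^ t l) ((u ∘ σ) l) = 0 := hσ l ▸ (hu.1 (σ l)).1
  obtain ⟨α, hα, hαu⟩ := hu.exists_linearEquiv hv hf fun l =>
    Submodule.mem_sup_left ⟨u (σ l), by simp [hu.extend_apply hv, σ]⟩
  exact ⟨α, hα, by simp [hαu, σ]⟩

lemma exists_linearEquiv_apply_eq_of_notMem {a : ℕ} {z : V} (hz : z ∈ subU f u t a)
    (hzf : z ∉ (subU f u t a).map f) :
    ∃ i, t i = a ∧
      ∃ α : V ≃ₗ[K] V, (α : V →ₗ[K] V) ∘ₗ f = f ∘ₗ (α : V →ₗ[K] V) ∧ α (u i) = z := by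
  obtain ⟨i, hi, hui⟩ := exists_mem_span_insert_sup_range hz hzf
  have hv (l : Fin k) : (f ^ t l) (Function.update u i z l) = 0 := by
    rcases eq_or_ne l i with rfl | hli
    · rw [Function.update_self, hi, ← Submodule.mem_bot K,
        ← map_pow_subU_eq_bot (a := a) fun l => (hu.1 l).1]
      exact Submodule.mem_map_of_mem hz
    · rw [Function.update_of_ne hli]
      exact (hu.1 l).1
  have hspan : Submodule.span K (insert z (u '' {i}ᶜ)) ≤
      range (hu.extend (Function.update u i z)) := by
    rw [Submodule.span_le, Set.insert_subset_iff]
    refine ⟨⟨u i, by simp [hu.extend_apply hv]⟩, ?_⟩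
    rintro _ ⟨l, hli, rfl⟩
    exact ⟨u l, by simp [hu.extend_apply hv, Function.update_of_ne hli]⟩
  obtain ⟨α, hα, hαu⟩ := hu.exists_linearEquiv hv hf fun l => by
    rcases eq_or_ne l i with rfl | hli
    · exact sup_le_sup_right hspan _ hui
    · exact Submodule.mem_sup_left
        ⟨u l, by simp [hu.extend_apply hv, Function.update_of_ne hli]⟩
  exact ⟨i, hi, α, hα, by simp [hαu]⟩

end IsGenTuple

lemma Chinv.map_pow_subU_le [FiniteDimensional K V] {k : ℕ} {f : V →ₗ[K] V}
    {u : Fin k → V} {t : Fin k → ℕ} {X : Submodule K V} (hX : Chinv f X) (hu : IsGenTuple f u t)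
    (hf : IsNilpotent f) {a q : ℕ} {z : V} (hz : z ∈ subU f u t a)
    (hzf : z ∉ (subU f u t a).map f) (hqz : (f ^ q) z ∈ X) :
    (subU f u t a).map (f ^ q) ≤ X := by
  obtain ⟨i, hi, α, hα, hαu⟩ := hu.exists_linearEquiv_apply_eq_of_notMem hf hz hzf
  have hiX : (f ^ q) (u i) ∈ X := (hX.pow_apply_mem_iff hα q (u i)).1 (hαu ▸ hqz)
  rw [map_pow_subU]
  refine iSup₂_le fun j (hj : t j = a) => cyc_le hX.1 ?_
  obtain ⟨β, hβ, hβu⟩ := hu.exists_linearEquiv_apply_eq_of_eq hf (hi.trans hj.symm)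
  exact hβu ▸ (hX.pow_apply_mem_iff hβ q (u i)).2 hiX

theorem stmt5_general [FiniteDimensional K V] (f : V →ₗ[K] V) (hf : IsNilpotent f)
    {k : ℕ} (u : Fin k → V) (t : Fin k → ℕ) (hu : IsGenTuple f u t)
    (X : Submodule K V) (hX : Chinv f X) :
    ∀ a ∈ Set.range t, ∃ c ≤ a, X ⊓ subU f u t a = (subU f u t a).map (f ^ c) := fun _ _ =>
  exists_inf_eq_map_pow subU_map_le (map_pow_subU_eq_bot fun i => (hu.1 i).1)
    fun _ _ hz hzf hqz => hX.map_pow_subU_le hu hf hz hzf hqz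

theorem stmt5 [FiniteDimensional K V] (f : V →ₗ[K] V) (hf : IsNilpotent f)
    {k : ℕ} (u : Fin k → V) (t : Fin k → ℕ) (ht : Monotone t) (hu : IsGenTuple f u t)
    (X : Submodule K V) (hX : Chinv f X) :
    ∀ a ∈ Set.range t, ∃ c ≤ a, X ⊓ subU f u t a = (subU f u t a).map (f ^ c) :=
  stmt5_general f hf u t hu X hX
end

section
/- Let V = ⟨u_1⟩ ⊕ ⟨u_2⟩ with f nilpotent, e(u_1) = q and e(u_2) = q + 1. Then every characteristic subspace of V is hyperinvariant. -/
open LinearMap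

variable {K : Type*} [Field K] {V : Type*} [AddCommGroup V] [Module K V]

/-!
A characteristic subspace `Y` is mapped onto itself by `1 + N`, hence into itself by `N`, for every
nilpotent `N` commuting with `f` (no division by `2`, so `K = GF(2)` is allowed). Two such maps
are `τ : u₂ ↦ u₁, u₁ ↦ 0` and `ρ : u₁ ↦ f u₂, u₂ ↦ 0`. For `x = a + b ∈ Y` with `a ∈ ⟨u₁⟩`,
`b ∈ ⟨u₂⟩`, comparing the heights of `a` and `b` gives `a = c(f) τ x` or `b = d(f) ρ x`; this is
where the exponents `q` and `q + 1` enter. So `a, b ∈ Y`. Finally, for `g` commuting with `f`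
the `⟨u₂⟩`-component of `g u₁` lies in `f ⟨u₂⟩`, so `g a = p(f) a + t(f) ρ a` and
`g b = r(f) τ b + s(f) b`, both in `Y`.
-/

open Polynomial

theorem exists_eq_X_pow_natTrailingDegree_mul {P : K[X]} (hP : P ≠ 0) :
    ∃ Q : K[X], P = X ^ P.natTrailingDegree * Q ∧ ∀ m, IsCoprime Q (X ^ m) := by
  obtain ⟨Q, hPQ, hQ⟩ := P.exists_eq_pow_rootMultiplicity_mul_and_not_dvd hP 0
  simp only [map_zero, sub_zero, rootMultiplicity_eq_natTrailingDegree'] at hPQ hQ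
  exact ⟨Q, hPQ, fun m => ((irreducible_X.coprime_iff_not_dvd).2 hQ).symm.pow_right⟩

theorem exists_X_pow_dvd_mul_sub {F G : K[X]} (hF : F ≠ 0)
    (hFG : X ^ F.natTrailingDegree ∣ G) (m : ℕ) : ∃ c, X ^ m ∣ F * c - G := by
  obtain ⟨Q, hFQ, hQ⟩ := exists_eq_X_pow_natTrailingDegree_mul hF
  obtain ⟨G₁, rfl⟩ := hFG
  obtain ⟨s, t, hst⟩ := hQ m
  exact ⟨s * G₁, -(X ^ F.natTrailingDegree * G₁ * t), by
    linear_combination (s * G₁) * hFQ + (X ^ F.natTrailingDegree * G₁) * hst⟩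

theorem exists_X_pow_dvd_mul_sub_or (P S : K[X]) (q : ℕ) :
    (∃ c, X ^ q ∣ S * c - P) ∨ ∃ d, X ^ (q + 1) ∣ X * P * d - S := by
  rcases eq_or_ne P 0 with rfl | hP
  · exact .inl ⟨0, by simp⟩
  rcases eq_or_ne S 0 with rfl | hS
  · exact .inr ⟨0, by simp⟩
  obtain ⟨P₁, hP₁, -⟩ := exists_eq_X_pow_natTrailingDegree_mul hP
  obtain ⟨S₁, hS₁, -⟩ := exists_eq_X_pow_natTrailingDegree_mul hS
  rcases le_or_gt S.natTrailingDegree P.natTrailingDegree with h | h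
  · exact .inl (exists_X_pow_dvd_mul_sub hS ((pow_dvd_pow X h).trans ⟨P₁, hP₁⟩) q)
  · have hXP : (X * P).natTrailingDegree = P.natTrailingDegree + 1 := by
      rw [natTrailingDegree_mul X_ne_zero hP, natTrailingDegree_X, add_comm]
    refine .inr (exists_X_pow_dvd_mul_sub (mul_ne_zero X_ne_zero hP) ?_ _)
    exact (pow_dvd_pow X (hXP ▸ h)).trans ⟨S₁, hS₁⟩

theorem Commute.aeval_right {A : Type*} [Ring A] [Algebra K A] {a b : A} (h : Commute a b)
    (p : K[X]) : Commute a (aeval b p) := by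
  induction p using Polynomial.induction_on with
  | C r => rw [aeval_C]; exact Algebra.commute_algebraMap_right r a
  | add p p' hp hp' => rw [map_add]; exact hp.add_right hp'
  | monomial n r ih => rw [pow_succ, ← mul_assoc, map_mul, aeval_X]; exact ih.mul_right h

section Cyclic

variable {f : V →ₗ[K] V}

theorem Commute.apply_aeval {g : V →ₗ[K] V} (hg : Commute g f) (P : K[X]) (v : V) :
    g (aeval f P v) = aeval f P (g v) :=
  LinearMap.congr_fun (hg.aeval_right P).eq v

theorem aeval_apply_aeval_comm (P Q : K[X]) (v : V) :
    aeval f P (aeval f Q v) = aeval f Q (aeval f P v) :=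
  LinearMap.congr_fun ((Commute.all P Q).map (aeval f)).eq v

theorem aeval_mul_apply (P Q : K[X]) (v : V) : aeval f (P * Q) v = aeval f P (aeval f Q v) := by
  rw [map_mul]; rfl

theorem aeval_X_mul_apply (P : K[X]) (v : V) : aeval f (X * P) v = f (aeval f P v) := by
  rw [aeval_mul_apply, aeval_X]

theorem aeval_eq_zero_of_X_pow_dvd {u : V} {ℓ : ℕ} (hu : (f ^ ℓ) u = 0) {P : K[X]}
    (h : X ^ ℓ ∣ P) : aeval f P u = 0 := by
  obtain ⟨T, rfl⟩ := h
  rw [mul_comm, aeval_mul_apply, aeval_X_pow, hu, map_zero]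

theorem aeval_eq_of_X_pow_dvd_sub {u : V} {ℓ : ℕ} (hu : (f ^ ℓ) u = 0) {P Q : K[X]}
    (h : X ^ ℓ ∣ P - Q) : aeval f P u = aeval f Q u := by
  rw [← sub_eq_zero, ← LinearMap.sub_apply, ← map_sub, aeval_eq_zero_of_X_pow_dvd hu h]

theorem ExpEq.aeval_eq_zero_iff {u : V} {ℓ : ℕ} (h : ExpEq f u ℓ) {P : K[X]} :
    aeval f P u = 0 ↔ X ^ ℓ ∣ P := by
  refine ⟨fun hP => ?_, aeval_eq_zero_of_X_pow_dvd h.1⟩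
  by_contra hdvd
  have hP0 : P ≠ 0 := by rintro rfl; exact hdvd (dvd_zero _)
  obtain ⟨Q, hPQ, hQ⟩ := exists_eq_X_pow_natTrailingDegree_mul hP0
  have hlt : P.natTrailingDegree < ℓ := by
    by_contra! hle
    exact hdvd ((pow_dvd_pow X hle).trans ⟨Q, hPQ⟩)
  obtain ⟨s, t, hst⟩ := hQ ℓ
  refine h.2 _ hlt ?_
  -- Bezout: `X ^ j = s P + t X ^ (ℓ + j)` with `j` the trailing degree of `P`.
  calc (f ^ P.natTrailingDegree) u = aeval f (X ^ P.natTrailingDegree) u := by rw [aeval_X_pow]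
    _ = aeval f (s * P) u := aeval_eq_of_X_pow_dvd_sub h.1
        ⟨t * X ^ P.natTrailingDegree, by
          linear_combination (-s) * hPQ - X ^ P.natTrailingDegree * hst⟩
    _ = 0 := by rw [aeval_mul_apply, hP, map_zero]

theorem cyc_eq_range (u : V) :
    cyc f u = LinearMap.range ((LinearMap.applyₗ u).comp (aeval f).toLinearMap) := by
  rw [LinearMap.range_eq_map, ← (basisMonomials K).span_eq, Submodule.map_span, ← Set.range_comp,
    cyc]
  congr! 2
  ext n
  simp

theorem mem_cyc_iff {u v : V} : v ∈ cyc f u ↔ ∃ P : K[X], aeval f P u = v := by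
  rw [cyc_eq_range]; rfl

theorem exists_aeval_add_aeval_eq {u₁ u₂ : V} (hV : IsCompl (cyc f u₁) (cyc f u₂)) (v : V) :
    ∃ P S : K[X], aeval f P u₁ + aeval f S u₂ = v := by
  obtain ⟨a, ha, b, hb, rfl⟩ := Submodule.mem_sup.1 (hV.sup_eq_top ▸ Submodule.mem_top (x := v))
  obtain ⟨P, rfl⟩ := mem_cyc_iff.1 ha
  obtain ⟨S, rfl⟩ := mem_cyc_iff.1 hb
  exact ⟨P, S, rfl⟩

theorem exists_cyc_lift {u w : V} (h : ∀ P : K[X], aeval f P u = 0 → aeval f P w = 0) :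
    ∃ φ : cyc f u →ₗ[K] V, ∀ P : K[X], φ ⟨aeval f P u, mem_cyc_iff.2 ⟨P, rfl⟩⟩ = aeval f P w := by
  set evu := (LinearMap.applyₗ u).comp (aeval f).toLinearMap
  set evw := (LinearMap.applyₗ w).comp (aeval f).toLinearMap
  have hk : ker evu ≤ ker evw := fun P hP => h P hP
  refine ⟨(ker evu).liftQ evw hk ∘ₗ evu.quotKerEquivRange.symm.toLinearMap ∘ₗ
    (LinearEquiv.ofEq _ _ (cyc_eq_range u)).toLinearMap, fun P => ?_⟩
  have : evu.quotKerEquivRange.symm ⟨aeval f P u, P, rfl⟩ = Submodule.Quotient.mk P :=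
    (LinearEquiv.symm_apply_eq _).2 rfl
  change (ker evu).liftQ evw hk (evu.quotKerEquivRange.symm ⟨aeval f P u, P, rfl⟩) = _
  rw [this]
  rfl

theorem exists_commute_of_isCompl {u₁ u₂ w₁ w₂ : V} (hV : IsCompl (cyc f u₁) (cyc f u₂))
    (hw₁ : ∀ P : K[X], aeval f P u₁ = 0 → aeval f P w₁ = 0)
    (hw₂ : ∀ P : K[X], aeval f P u₂ = 0 → aeval f P w₂ = 0) :
    ∃ g : V →ₗ[K] V, Commute g f ∧ (∀ P : K[X], g (aeval f P u₁) = aeval f P w₁) ∧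
      ∀ P : K[X], g (aeval f P u₂) = aeval f P w₂ := by
  obtain ⟨φ₁, hφ₁⟩ := exists_cyc_lift hw₁
  obtain ⟨φ₂, hφ₂⟩ := exists_cyc_lift hw₂
  have hg₁ (P : K[X]) : ofIsCompl hV φ₁ φ₂ (aeval f P u₁) = aeval f P w₁ :=
    (ofIsCompl_apply_left hV ⟨_, _⟩).trans (hφ₁ P)
  have hg₂ (P : K[X]) : ofIsCompl hV φ₁ φ₂ (aeval f P u₂) = aeval f P w₂ :=
    (ofIsCompl_apply_right hV ⟨_, _⟩).trans (hφ₂ P)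
  refine ⟨ofIsCompl hV φ₁ φ₂, LinearMap.ext fun v => ?_, hg₁, hg₂⟩
  obtain ⟨P, S, rfl⟩ := exists_aeval_add_aeval_eq hV v
  simp only [Module.End.mul_apply, map_add, ← aeval_X_mul_apply, hg₁, hg₂]

theorem exists_isNilpotent_commute_of_isCompl {u₁ u₂ w : V}
    (hV : IsCompl (cyc f u₁) (cyc f u₂)) (hw : w ∈ cyc f u₂)
    (hann : ∀ P : K[X], aeval f P u₁ = 0 → aeval f P w = 0) :
    ∃ N : V →ₗ[K] V, Commute N f ∧ IsNilpotent N ∧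
      (∀ P : K[X], N (aeval f P u₁) = aeval f P w) ∧ ∀ S : K[X], N (aeval f S u₂) = 0 := by
  obtain ⟨N, hNf, hN₁, hN₂⟩ :=
    exists_commute_of_isCompl (w₂ := 0) hV hann fun _ _ => map_zero _
  simp only [map_zero] at hN₂
  obtain ⟨W, rfl⟩ := mem_cyc_iff.1 hw
  refine ⟨N, hNf, ⟨2, LinearMap.ext fun v => ?_⟩, hN₁, hN₂⟩
  obtain ⟨P, S, rfl⟩ := exists_aeval_add_aeval_eq hV v
  simp only [sq, Module.End.mul_apply, map_add, hN₁, hN₂, ← aeval_mul_apply, add_zero,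
    LinearMap.zero_apply, map_zero]

end Cyclic

section Characteristic

variable {f N : V →ₗ[K] V} {Y : Submodule K V}

theorem Chinv.map_le_of_isNilpotent (hY : Chinv f Y) (hNf : Commute N f) (hN : IsNilpotent N) :
    Y.map N ≤ Y := by
  let α := LinearMap.GeneralLinearGroup.toLinearEquiv hN.isUnit_one_add.unit
  have hα : Y.map (α : V →ₗ[K] V) = Y := hY.2 α ((Commute.one_left f).add_left hNf)
  rintro _ ⟨x, hx, rfl⟩
  have : x + N x ∈ Y := hα ▸ Submodule.mem_map_of_mem hx
  simpa using Y.sub_mem this hx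

theorem Chinv.aeval_mem (hY : Chinv f Y) (P : K[X]) {x : V} (hx : x ∈ Y) : aeval f P x ∈ Y :=
  aeval_apply_smul_mem_of_le_comap hx P f (Submodule.map_le_iff_le_comap.1 hY.1)

theorem Chinv.aeval_apply_mem (hY : Chinv f Y) (hNf : Commute N f) (hN : IsNilpotent N)
    (P : K[X]) {x : V} (hx : x ∈ Y) : aeval f P (N x) ∈ Y :=
  hY.map_le_of_isNilpotent (((Commute.refl f).aeval_right P).symm.mul_left hNf)
    ((hNf.aeval_right P).symm.isNilpotent_mul_left hN) (Submodule.mem_map_of_mem hx)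

end Characteristic

section TwoBlocks

variable {f : V →ₗ[K] V} {u₁ u₂ : V} {q : ℕ}

theorem exists_isNilpotent_commute_u₂_to_u₁ (hu₁ : (f ^ q) u₁ = 0) (h₂ : ExpEq f u₂ (q + 1))
    (hV : IsCompl (cyc f u₁) (cyc f u₂)) :
    ∃ τ : V →ₗ[K] V, Commute τ f ∧ IsNilpotent τ ∧
      (∀ S : K[X], τ (aeval f S u₂) = aeval f S u₁) ∧ ∀ P : K[X], τ (aeval f P u₁) = 0 :=
  exists_isNilpotent_commute_of_isCompl hV.symm (mem_cyc_iff.2 ⟨(1 : K[X]), by simp⟩)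
    fun _ hP => aeval_eq_zero_of_X_pow_dvd hu₁
      ((pow_dvd_pow (X : K[X]) q.le_succ).trans (h₂.aeval_eq_zero_iff.1 hP))

theorem exists_isNilpotent_commute_u₁_to_f_u₂ (h₁ : ExpEq f u₁ q) (hu₂ : (f ^ (q + 1)) u₂ = 0)
    (hV : IsCompl (cyc f u₁) (cyc f u₂)) :
    ∃ ρ : V →ₗ[K] V, Commute ρ f ∧ IsNilpotent ρ ∧
      (∀ P : K[X], ρ (aeval f P u₁) = aeval f P (f u₂)) ∧ ∀ S : K[X], ρ (aeval f S u₂) = 0 :=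
  exists_isNilpotent_commute_of_isCompl hV (mem_cyc_iff.2 ⟨(X : K[X]), by rw [aeval_X]⟩)
    fun _ hP => aeval_eq_zero_of_X_pow_dvd (by rwa [← Module.End.mul_apply, ← pow_succ])
      (h₁.aeval_eq_zero_iff.1 hP)

theorem exists_apply_eq_aeval_add_aeval_apply (hu₁ : (f ^ q) u₁ = 0) (h₂ : ExpEq f u₂ (q + 1))
    (hV : IsCompl (cyc f u₁) (cyc f u₂)) {g : V →ₗ[K] V} (hg : Commute g f) :
    ∃ P T : K[X], g u₁ = aeval f P u₁ + aeval f T (f u₂) := by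
  obtain ⟨P, S, hPS⟩ := exists_aeval_add_aeval_eq hV (g u₁)
  have hS : aeval f (X ^ q * S) u₂ = 0 := by
    have hq : aeval f (X ^ q : K[X]) u₁ = 0 := by rwa [aeval_X_pow]
    have h := hg.apply_aeval (X ^ q : K[X]) u₁
    rw [hq, map_zero, ← hPS, map_add, ← aeval_mul_apply, ← aeval_mul_apply,
      aeval_eq_zero_of_X_pow_dvd hu₁ (dvd_mul_right _ _), zero_add] at h
    exact h.symm
  obtain ⟨T, rfl⟩ : X ∣ S := by
    have h := h₂.aeval_eq_zero_iff.1 hS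
    rwa [pow_succ, mul_dvd_mul_iff_left (pow_ne_zero _ X_ne_zero)] at h
  refine ⟨P, T, ?_⟩
  rw [← hPS, mul_comm, aeval_mul_apply, aeval_X]

theorem Chinv.aeval_mem_of_add_mem (h₁ : ExpEq f u₁ q) (h₂ : ExpEq f u₂ (q + 1))
    (hV : IsCompl (cyc f u₁) (cyc f u₂)) {Y : Submodule K V} (hY : Chinv f Y) {P S : K[X]}
    (hx : aeval f P u₁ + aeval f S u₂ ∈ Y) : aeval f P u₁ ∈ Y ∧ aeval f S u₂ ∈ Y := by
  obtain ⟨τ, hτf, hτ, hτ₂, hτ₁⟩ := exists_isNilpotent_commute_u₂_to_u₁ h₁.1 h₂ hV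
  obtain ⟨ρ, hρf, hρ, hρ₁, hρ₂⟩ := exists_isNilpotent_commute_u₁_to_f_u₂ h₁ h₂.1 hV
  have hτx : τ (aeval f P u₁ + aeval f S u₂) = aeval f S u₁ := by rw [map_add, hτ₁, hτ₂, zero_add]
  have hρx : ρ (aeval f P u₁ + aeval f S u₂) = aeval f P (f u₂) := by
    rw [map_add, hρ₁, hρ₂, add_zero]
  suffices hS : aeval f S u₂ ∈ Y from ⟨by simpa using Y.sub_mem hx hS, hS⟩
  rcases exists_X_pow_dvd_mul_sub_or P S q with ⟨c, hc⟩ | ⟨d, hd⟩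
  · have hP : aeval f P u₁ ∈ Y := by
      rw [← aeval_eq_of_X_pow_dvd_sub h₁.1 hc, mul_comm, aeval_mul_apply, ← hτx]
      exact hY.aeval_apply_mem hτf hτ c hx
    simpa using Y.sub_mem hx hP
  · rw [← aeval_eq_of_X_pow_dvd_sub h₂.1 hd, mul_comm, aeval_mul_apply, mul_comm X P,
      aeval_mul_apply, aeval_X, ← hρx]
    exact hY.aeval_apply_mem hρf hρ d hx

end TwoBlocks

theorem stmt13_general (f : V →ₗ[K] V)
    (u₁ u₂ : V) (q : ℕ) (h₁ : ExpEq f u₁ q) (h₂ : ExpEq f u₂ (q + 1))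
    (hV : IsCompl (cyc f u₁) (cyc f u₂)) :
    ∀ X : Submodule K V, Chinv f X → Hinv f X := by
  intro Y hY g hg
  rintro _ ⟨x, hx, rfl⟩
  obtain ⟨P, S, rfl⟩ := exists_aeval_add_aeval_eq hV x
  obtain ⟨hP, hS⟩ := hY.aeval_mem_of_add_mem h₁ h₂ hV hx
  obtain ⟨τ, hτf, hτ, hτ₂, -⟩ := exists_isNilpotent_commute_u₂_to_u₁ h₁.1 h₂ hV
  obtain ⟨ρ, hρf, hρ, hρ₁, -⟩ := exists_isNilpotent_commute_u₁_to_f_u₂ h₁ h₂.1 hV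
  obtain ⟨P₁, T, hgu₁⟩ := exists_apply_eq_aeval_add_aeval_apply h₁.1 h₂ hV hg
  obtain ⟨P₂, S₂, hgu₂⟩ := exists_aeval_add_aeval_eq hV (g u₂)
  have hgP : g (aeval f P u₁) = aeval f P₁ (aeval f P u₁) + aeval f T (ρ (aeval f P u₁)) := by
    rw [Commute.apply_aeval hg, hgu₁, hρ₁, map_add, aeval_apply_aeval_comm P,
      aeval_apply_aeval_comm P]
  have hgS : g (aeval f S u₂) = aeval f P₂ (τ (aeval f S u₂)) + aeval f S₂ (aeval f S u₂) := by
    rw [Commute.apply_aeval hg, ← hgu₂, hτ₂, map_add, aeval_apply_aeval_comm S,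
      aeval_apply_aeval_comm S]
  rw [map_add, hgP, hgS]
  exact Y.add_mem (Y.add_mem (hY.aeval_mem P₁ hP) (hY.aeval_apply_mem hρf hρ T hP))
    (Y.add_mem (hY.aeval_apply_mem hτf hτ P₂ hS) (hY.aeval_mem S₂ hS))

theorem stmt13 [FiniteDimensional K V] (f : V →ₗ[K] V) (hf : IsNilpotent f)
    (u₁ u₂ : V) (q : ℕ) (h₁ : ExpEq f u₁ q) (h₂ : ExpEq f u₂ (q + 1))
    (hV : IsCompl (cyc f u₁) (cyc f u₂)) :
    ∀ X : Submodule K V, Chinv f X → Hinv f X :=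
  stmt13_general f u₁ u₂ q h₁ h₂ hV
end
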